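/- Let D, K be positive integers, let a_1, …, a_K ∈ ℝ^D, let w ∈ ℝ^K be a probability vector (w_k ≥ 0, Σ_k w_k = 1), and let σ > 0. Let H be a random variable on {1,…,K} with P(H = k) = w_k, let Z be a random vector in ℝ^D whose coordinates are independent standard (mean 0, variance 1) Gaussian random variables, with H and Z independent, and set x = a_H + σZ, with mean m = E[x] = Σ_k w_k a_k. Then for all indices i, j, l ∈ {1,…,D}, E[x_i x_j x_l] = Σ_{k=1}^K w_k a_{ik} a_{jk} a_{lk} + σ² (m_i δ_{jl} + m_j δ_{il} + m_l δ_{ij}). Consequently, E[x ⊗ x ⊗ x] − σ² Σ_{i=1}^D (m ⊗ e_i ⊗ e_i + e_i ⊗ m ⊗ e_i + e_i ⊗ e_i ⊗ m) = Σ_{k=1}^K w_k a_k ⊗ a_k ⊗ a_k, where e_i denotes the i-th standard basis vector of ℝ^D. -/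

import Mathlib

/-!
Conditioning on the component `H`, which is independent of `Z`, turns `E[x_i x_j x_l]` into
`∑ k, w k * E[(a_k + σ Z)_i (a_k + σ Z)_j (a_k + σ Z)_l]`. The standard Gaussian vector `Z` has
the same law as `-Z`, so the odd-degree terms of each expansion vanish, and `E[Z_i Z_j] = δ_ij`
turns the quadratic ones into `σ² (a_{ik} δ_{jl} + a_{jk} δ_{il} + a_{lk} δ_{ij})`; summing against
`w` produces `m`. The tensor identity is the same statement, since
`∑ i, (e_i ⊗ e_i)_{pq} = δ_{pq}`.
-/

open MeasureTheory ProbabilityTheory NNReal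

section Moments

variable {Ω ι : Type*} [MeasurableSpace Ω] {P : Measure Ω} [Fintype ι]

lemma MeasureTheory.MemLp.integrable_eval_mul_eval {X : Ω → ι → ℝ} (hX : MemLp X 2 P)
    (i j : ι) : Integrable (fun ω => X ω i * X ω j) P := by
  have := hX.aestronglyMeasurable
  refine (hX.integrable_norm_pow two_ne_zero).mono' (by fun_prop) (.of_forall fun ω => ?_)
  rw [norm_mul, sq]
  exact mul_le_mul (norm_le_pi_norm _ i) (norm_le_pi_norm _ j) (norm_nonneg _) (norm_nonneg _)

lemma MeasureTheory.MemLp.integrable_eval_mul_eval_mul_eval {X : Ω → ι → ℝ} (hX : MemLp X 3 P)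
    (i j l : ι) : Integrable (fun ω => X ω i * X ω j * X ω l) P := by
  have := hX.aestronglyMeasurable
  refine (hX.integrable_norm_pow three_ne_zero).mono' (by fun_prop) (.of_forall fun ω => ?_)
  rw [norm_mul, norm_mul, pow_three, ← mul_assoc]
  gcongr <;> exact norm_le_pi_norm _ _

lemma ProbabilityTheory.IdentDistrib.integral_affine_mul_affine_mul_affine
    [IsProbabilityMeasure P] {Y : Ω → ι → ℝ} (hsymm : IdentDistrib Y (-Y) P P) (hY : MemLp Y 3 P)
    (c : ι → ℝ) (σ : ℝ) (i j l : ι) :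
    ∫ ω, (c i + σ * Y ω i) * (c j + σ * Y ω j) * (c l + σ * Y ω l) ∂P =
      c i * c j * c l + σ ^ 2 * (c i * ∫ ω, Y ω j * Y ω l ∂P + c j * ∫ ω, Y ω i * Y ω l ∂P +
        c l * ∫ ω, Y ω i * Y ω j ∂P) := by
  set F : (ι → ℝ) → ℝ := fun y => (c i + σ * y i) * (c j + σ * y j) * (c l + σ * y l) with hF
  have hFY : Integrable (fun ω => F (Y ω)) P :=
    ((memLp_const c).add (hY.const_smul σ)).integrable_eval_mul_eval_mul_eval i j l
  have hFident := hsymm.comp (by fun_prop : Measurable F)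
  have hFnegY_int : Integrable (fun ω => F (-Y ω)) P := hFident.integrable_snd hFY
  have hneg_eq : ∫ ω, F (-Y ω) ∂P = ∫ ω, F (Y ω) ∂P := hFident.integral_eq.symm
  have hY2 := (hY.mono_exponent (by norm_num : (2 : ENNReal) ≤ 3)).integrable_eval_mul_eval
  have hjl := hY2 j l
  have hil := hY2 i l
  have hij := hY2 i j
  calc ∫ ω, F (Y ω) ∂P = ∫ ω, (F (Y ω) + F (-Y ω)) / 2 ∂P := by
        rw [integral_div, integral_add hFY hFnegY_int, hneg_eq]; ring
    _ = ∫ ω, (c i * c j * c l + σ ^ 2 * (c i * (Y ω j * Y ω l) + c j * (Y ω i * Y ω l) +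
          c l * (Y ω i * Y ω j))) ∂P := by
        congr 1; funext ω; simp only [hF, Pi.neg_apply]; ring
    _ = _ := by
        rw [integral_add (by fun_prop) (by fun_prop), integral_const, integral_const_mul,
          integral_add (by fun_prop) (by fun_prop), integral_add (by fun_prop) (by fun_prop)]
        simp only [integral_const_mul, probReal_univ, one_smul]

end Moments

namespace ProbabilityTheory.iIndepFun

variable {Ω ι : Type*} [MeasurableSpace Ω] {P : Measure Ω} {Z : Ω → ι → ℝ} {v : ι → ℝ≥0}

lemma memLp_of_hasLaw_gaussianReal [Fintype ι] (hZindep : iIndepFun (fun i ω => Z ω i) P)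
    (hZ : ∀ i, HasLaw (fun ω => Z ω i) (gaussianReal 0 (v i)) P) {p : ENNReal} (hp : p ≠ ⊤) :
    MemLp Z p P :=
  (hZindep.hasGaussianLaw fun i => (hZ i).hasGaussianLaw).memLp hp

lemma identDistrib_neg_of_hasLaw_gaussianReal [Fintype ι]
    (hZindep : iIndepFun (fun i ω => Z ω i) P)
    (hZ : ∀ i, HasLaw (fun ω => Z ω i) (gaussianReal 0 (v i)) P) :
    IdentDistrib Z (-Z) P P where
  aemeasurable_fst := aemeasurable_pi_lambda _ fun i => (hZ i).aemeasurable
  aemeasurable_snd := (aemeasurable_pi_lambda _ fun i => (hZ i).aemeasurable).neg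
  map_eq := by
    have hnegZ : ∀ i, HasLaw (fun ω => -Z ω i) (gaussianReal 0 (v i)) P := fun i => by
      have h := gaussianReal_neg (hZ i)
      rwa [neg_zero] at h
    have hnegindep : iIndepFun (fun i ω => -Z ω i) P :=
      hZindep.comp (fun _ => Neg.neg) fun _ => measurable_neg
    rw [hZindep.map_fun_eq_pi_map fun i => (hZ i).aemeasurable,
      show -Z = fun ω i => -Z ω i from rfl,
      hnegindep.map_fun_eq_pi_map fun i => (hnegZ i).aemeasurable]
    simp only [(hZ _).map_eq, (hnegZ _).map_eq]

lemma integral_eval_mul_eval_of_hasLaw_gaussianReal [DecidableEq ι]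
    (hZindep : iIndepFun (fun i ω => Z ω i) P)
    (hZ : ∀ i, HasLaw (fun ω => Z ω i) (gaussianReal 0 (v i)) P) (i j : ι) :
    ∫ ω, Z ω i * Z ω j ∂P = if i = j then (v i : ℝ) else 0 := by
  have hmean : ∀ i, ∫ ω, Z ω i ∂P = 0 := fun i => by
    simpa using (hZ i).integral_eq
  split_ifs with hij
  · subst hij
    have hvar := (hZ i).variance_eq
    rw [variance_id_gaussianReal, variance_eq_integral (hZ i).aemeasurable, hmean] at hvar
    simpa [sq] using hvar
  · rw [(hZindep.indepFun hij).integral_fun_mul_eq_mul_integral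
      (hZ i).aemeasurable.aestronglyMeasurable (hZ j).aemeasurable.aestronglyMeasurable,
      hmean, zero_mul]

end ProbabilityTheory.iIndepFun

lemma ProbabilityTheory.IndepFun.integral_comp_eq_sum {Ω κ E : Type*} [MeasurableSpace Ω]
    {P : Measure Ω} [Fintype κ] [MeasurableSpace κ] [MeasurableSingletonClass κ]
    [MeasurableSpace E] {H : Ω → κ} {Z : Ω → E} (hHZ : IndepFun H Z P) (hH : Measurable H)
    {f : κ → E → ℝ} (hf : ∀ k, Measurable (f k)) (hfZ : ∀ k, Integrable (fun ω => f k (Z ω)) P) :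
    ∫ ω, f (H ω) (Z ω) ∂P = ∑ k, P.real (H ⁻¹' {k}) * ∫ ω, f k (Z ω) ∂P := by
  have hsplit : ∀ ω, f (H ω) (Z ω) = ∑ k, (H ⁻¹' {k}).indicator 1 ω * f k (Z ω) := by
    intro ω
    rw [Finset.sum_eq_single (H ω) (fun k _ hk => by simp [Ne.symm hk]) (by simp)]
    simp
  have hind : ∀ k, IndepFun ((H ⁻¹' {k}).indicator (1 : Ω → ℝ)) (fun ω => f k (Z ω)) P :=
    fun k => hHZ.comp (measurable_one.indicator (measurableSet_singleton k)) (hf k)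
  have hmeas : ∀ k, MeasurableSet (H ⁻¹' {k}) := fun k => hH (measurableSet_singleton k)
  simp_rw [hsplit]
  rw [integral_finsetSum _ fun k _ => ?_]
  · refine Finset.sum_congr rfl fun k _ => ?_
    rw [(hind k).integral_fun_mul_eq_mul_integral
      (measurable_one.indicator (hmeas k)).aestronglyMeasurable (hfZ k).aestronglyMeasurable,
      integral_indicator_one (hmeas k)]
  · refine (hfZ k).bdd_mul (c := 1) (measurable_one.indicator (hmeas k)).aestronglyMeasurable
      (.of_forall fun ω => ?_)
    by_cases h : ω ∈ H ⁻¹' {k} <;> simp [h]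

lemma sum_pi_single_tensor {ι : Type*} [Fintype ι] [DecidableEq ι] (m : ι → ℝ) (p q r : ι) :
    ∑ i, (m p * (Pi.single i 1 : ι → ℝ) q * (Pi.single i 1 : ι → ℝ) r +
        (Pi.single i 1 : ι → ℝ) p * m q * (Pi.single i 1 : ι → ℝ) r +
        (Pi.single i 1 : ι → ℝ) p * (Pi.single i 1 : ι → ℝ) q * m r) =
      m p * (if q = r then 1 else 0) + m q * (if p = r then 1 else 0) +
        m r * (if p = q then 1 else 0) := by
  simp only [Pi.single_apply, Finset.sum_add_distrib, mul_ite, ite_mul, mul_one, one_mul,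
    mul_zero, zero_mul, Finset.sum_ite_eq, Finset.mem_univ, if_true]

theorem gaussian_mixture_third_moment_general
    {Ω : Type*} [MeasureSpace Ω] [IsProbabilityMeasure (ℙ : Measure Ω)]
    (D K : ℕ)
    (a : Fin K → Fin D → ℝ) (w : Fin K → ℝ)
    (hw0 : ∀ k, 0 ≤ w k)
    (σ : ℝ)
    (H : Ω → Fin K) (Z : Ω → Fin D → ℝ)
    (hH : Measurable H) (hZ : Measurable Z)
    (hHk : ∀ k, (ℙ : Measure Ω) (H ⁻¹' {k}) = ENNReal.ofReal (w k))
    (hZgauss : ∀ i, Measure.map (fun ω => Z ω i) (ℙ : Measure Ω) = gaussianReal 0 1)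
    (hZindep : iIndepFun (fun i ω => Z ω i) (ℙ : Measure Ω))
    (hHZ : IndepFun H Z (ℙ : Measure Ω))
    (x : Ω → Fin D → ℝ) (hx : ∀ ω, x ω = a (H ω) + σ • Z ω)
    (m : Fin D → ℝ) (hm : m = ∑ k, w k • a k)
    (e : Fin D → Fin D → ℝ) (he : ∀ i, e i = Pi.single i 1) :
    (∀ i j l, (∫ ω, x ω i * x ω j * x ω l ∂(ℙ : Measure Ω)) =
        (∑ k, w k * (a k i * a k j * a k l)) +
          σ ^ 2 * (m i * (if j = l then 1 else 0) + m j * (if i = l then 1 else 0) +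
            m l * (if i = j then 1 else 0))) ∧
      (fun p q r => (∫ ω, x ω p * x ω q * x ω r ∂(ℙ : Measure Ω)) -
          σ ^ 2 * ∑ i, (m p * e i q * e i r + e i p * m q * e i r + e i p * e i q * m r)) =
        (fun p q r => ∑ k, w k * (a k p * a k q * a k r)) := by
  have hZlaw : ∀ i, HasLaw (fun ω => Z ω i) (gaussianReal 0 1) ℙ :=
    fun i => ⟨((measurable_pi_apply i).comp hZ).aemeasurable, hZgauss i⟩
  have hZ3 : MemLp Z 3 ℙ := hZindep.memLp_of_hasLaw_gaussianReal hZlaw (by norm_num)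
  have hsymm := hZindep.identDistrib_neg_of_hasLaw_gaussianReal hZlaw
  have hweight : ∀ k, (ℙ : Measure Ω).real (H ⁻¹' {k}) = w k := fun k => by
    rw [measureReal_def, hHk, ENNReal.toReal_ofReal (hw0 k)]
  have hmoment : ∀ i j l, (∫ ω, x ω i * x ω j * x ω l ∂(ℙ : Measure Ω)) =
      (∑ k, w k * (a k i * a k j * a k l)) +
        σ ^ 2 * (m i * (if j = l then 1 else 0) + m j * (if i = l then 1 else 0) +
          m l * (if i = j then 1 else 0)) := by
    intro i j l
    simp only [hx, Pi.add_apply, Pi.smul_apply, smul_eq_mul]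
    rw [hHZ.integral_comp_eq_sum hH
      (f := fun k z => (a k i + σ * z i) * (a k j + σ * z j) * (a k l + σ * z l)) (by fun_prop)
      fun k => ((memLp_const (a k)).add (hZ3.const_smul σ)).integrable_eval_mul_eval_mul_eval i j l]
    simp only [hweight, hsymm.integral_affine_mul_affine_mul_affine hZ3,
      hZindep.integral_eval_mul_eval_of_hasLaw_gaussianReal hZlaw, hm]
    simp only [Finset.sum_apply, Pi.smul_apply, smul_eq_mul, mul_add, Finset.sum_mul,
      Finset.mul_sum, ← Finset.sum_add_distrib]
    refine Finset.sum_congr rfl fun k _ => ?_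
    push_cast
    ring
  refine ⟨hmoment, ?_⟩
  funext p q r
  rw [hmoment, funext he, sum_pi_single_tensor]
  ring

/-- Spherical Gaussian mixture third moment: with `m = E[x] = ∑ k, w k • a k`,
`E[x_i x_j x_l] = ∑ k, w k a_{ik} a_{jk} a_{lk} + σ² (m_i δ_{jl} + m_j δ_{il} + m_l δ_{ij})`;
consequently
`E[x⊗x⊗x] − σ² ∑ i (m⊗e_i⊗e_i + e_i⊗m⊗e_i + e_i⊗e_i⊗m) = ∑ k, w k • a_k⊗a_k⊗a_k`. -/
theorem gaussian_mixture_third_moment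
    {Ω : Type*} [MeasureSpace Ω] [IsProbabilityMeasure (ℙ : Measure Ω)]
    (D K : ℕ) (hD : 0 < D) (hK : 0 < K)
    (a : Fin K → Fin D → ℝ) (w : Fin K → ℝ)
    (hw0 : ∀ k, 0 ≤ w k) (hw1 : ∑ k, w k = 1)
    (σ : ℝ) (hσ : 0 < σ)
    (H : Ω → Fin K) (Z : Ω → Fin D → ℝ)
    (hH : Measurable H) (hZ : Measurable Z)
    (hHk : ∀ k, (ℙ : Measure Ω) (H ⁻¹' {k}) = ENNReal.ofReal (w k))
    (hZgauss : ∀ i, Measure.map (fun ω => Z ω i) (ℙ : Measure Ω) = gaussianReal 0 1)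
    (hZindep : iIndepFun (fun i ω => Z ω i) (ℙ : Measure Ω))
    (hHZ : IndepFun H Z (ℙ : Measure Ω))
    (x : Ω → Fin D → ℝ) (hx : ∀ ω, x ω = a (H ω) + σ • Z ω)
    (m : Fin D → ℝ) (hm : m = ∑ k, w k • a k)
    (e : Fin D → Fin D → ℝ) (he : ∀ i, e i = Pi.single i 1) :
    (∀ i j l, (∫ ω, x ω i * x ω j * x ω l ∂(ℙ : Measure Ω)) =
        (∑ k, w k * (a k i * a k j * a k l)) +
          σ ^ 2 * (m i * (if j = l then 1 else 0) + m j * (if i = l then 1 else 0) +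
            m l * (if i = j then 1 else 0))) ∧
      (fun p q r => (∫ ω, x ω p * x ω q * x ω r ∂(ℙ : Measure Ω)) -
          σ ^ 2 * ∑ i, (m p * e i q * e i r + e i p * m q * e i r + e i p * e i q * m r)) =
        (fun p q r => ∑ k, w k * (a k p * a k q * a k r)) :=
  gaussian_mixture_third_moment_general D K a w hw0 σ H Z hH hZ hHk hZgauss hZindep hHZ x hx m hm e
    he
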